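/- arXiv:1007.4784 — 3 statements merged into one kernel-verified Lean document; each statement's English description precedes it below -/
import Mathlib

section
/- Let $S$ be a type (of colors), and let $\mathbb{T}_S$ be the set of finite rooted trees with vertices colored by $S$. For trees $t_1, t_2$, define $t_1 \rhd t_2 := \sum_{s} n(t_1,t_2,s)\, s$ in the free vector space $\T_S$ on $\mathbb{T}_S$, where $n(t_1,t_2,s)$ is the number of edges $e$ of $s$ such that removing $e$ leaves the subtree below $e$ (with root the lower end of $e$) isomorphic to $t_1$ as a colored rooted tree, and the component containing the root of $s$ isomorphic to $t_2$. Then $\rhd$ is a left pre-Lie structure on $\T_S$. -/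
/-- An `S`-colored rooted tree on the vertex set `Fin (n+1)`, given by a parent
function (with root `0`, and each non-root vertex's parent strictly smaller, which
makes the graph an acyclic rooted tree) together with a coloring of the vertices. -/
def PreTree (S : Type) (n : ℕ) : Type :=
  {pc : (Fin (n+1) → Fin (n+1)) × (Fin (n+1) → S) //
    pc.1 0 = 0 ∧ ∀ i, i ≠ 0 → pc.1 i < i}

instance (S : Type) (n : ℕ) [DecidableEq S] [Fintype S] : Fintype (PreTree S n) := by
  unfold PreTree; infer_instance

/-- `desc t v i` : `v` is an ancestor of `i` (or `i` itself), i.e. `i` lies in the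
subtree below `v`; equivalently, `i` is separated from the root when the edge above
`v` is cut. -/
def desc {S : Type} {n : ℕ} (t : PreTree S n) (v i : Fin (n+1)) : Prop :=
  ∃ k ∈ Finset.range (n+2), (t.1.1)^[k] i = v

instance {S : Type} {n : ℕ} (t : PreTree S n) (v i : Fin (n+1)) :
    Decidable (desc t v i) := by unfold desc; infer_instance

/-- `IsoBelow a t v` : the subtree `P_e(t)` of `t` hanging below the edge `e` above
`v` is isomorphic to `a` as an `S`-colored rooted tree. -/
def IsoBelow {S : Type} {p m : ℕ} (a : PreTree S p) (t : PreTree S m)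
    (v : Fin (m+1)) : Prop :=
  ∃ f : Fin (p+1) → Fin (m+1),
    Function.Injective f ∧ f 0 = v ∧
    (∀ j, desc t v j ↔ ∃ i, f i = j) ∧
    (∀ i, i ≠ 0 → t.1.1 (f i) = f (a.1.1 i)) ∧
    (∀ i, t.1.2 (f i) = a.1.2 i)

instance {S : Type} [DecidableEq S] {p m : ℕ} (a : PreTree S p) (t : PreTree S m)
    (v : Fin (m+1)) : Decidable (IsoBelow a t v) := by
  unfold IsoBelow; infer_instance

/-- `IsoAbove b t v` : the complementary component `R_e(t)` containing the root,
obtained by cutting the edge above `v`, is isomorphic to `b` as an `S`-colored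
rooted tree. -/
def IsoAbove {S : Type} {q m : ℕ} (b : PreTree S q) (t : PreTree S m)
    (v : Fin (m+1)) : Prop :=
  ∃ g : Fin (q+1) → Fin (m+1),
    Function.Injective g ∧ g 0 = 0 ∧
    (∀ j, ¬ desc t v j ↔ ∃ i, g i = j) ∧
    (∀ i, i ≠ 0 → t.1.1 (g i) = g (b.1.1 i)) ∧
    (∀ i, t.1.2 (g i) = b.1.2 i)

instance {S : Type} [DecidableEq S] {q m : ℕ} (b : PreTree S q) (t : PreTree S m)
    (v : Fin (m+1)) : Decidable (IsoAbove b t v) := by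
  unfold IsoAbove; infer_instance

/-- `graftCount a b t = n(a,b,t)`: the number of edges `e` of `t` (identified with
their lower endpoints, the non-root vertices) such that `P_e(t) ≅ a` and
`R_e(t) ≅ b` as `S`-colored rooted trees. -/
def graftCount {S : Type} [DecidableEq S] {p q m : ℕ}
    (a : PreTree S p) (b : PreTree S q) (t : PreTree S m) : ℕ :=
  (Finset.univ.filter fun v : Fin (m+1) =>
    v ≠ 0 ∧ IsoBelow a t v ∧ IsoAbove b t v).card

/-- Isomorphism of `S`-colored rooted trees on the same vertex set. -/
def treeRel {S : Type} {n : ℕ} (t t' : PreTree S n) : Prop :=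
  ∃ e : Fin (n+1) ≃ Fin (n+1),
    e 0 = 0 ∧ (∀ i, i ≠ 0 → t'.1.1 (e i) = e (t.1.1 i)) ∧
    (∀ i, t'.1.2 (e i) = t.1.2 i)

/-- Isomorphism classes of `S`-colored rooted trees with `n+1` vertices. -/
def TClass (S : Type) [Fintype S] [DecidableEq S] (n : ℕ) : Type :=
  Quot (@treeRel S n)

noncomputable instance (S : Type) [Fintype S] [DecidableEq S] (n : ℕ) :
    Fintype (TClass S n) :=
  letI : DecidableEq (TClass S n) := Classical.decEq _
  Fintype.ofSurjective (Quot.mk _) (fun q => Quot.exists_rep q)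

/-!
Cutting an edge `e` of `s` and then an edge `f` of one of the two pieces is the same as cutting
the pair `{e, f}` of edges of `s`; summing over isomorphism classes `[T]` of the intermediate
piece is harmless because that piece determines its class. In `(a ▷ b) ▷ c` the edge cutting off
`a` lies strictly below the edge cutting off `a ▷ b`, the piece between them being `b`. In
`a ▷ (b ▷ c)` the edge cutting off `b` is any edge of the root component left after cutting off
`a`: either it lies above the first edge, which gives exactly the configurations of
`(a ▷ b) ▷ c`, or the two edges are incomparable. So `(a ▷ b) ▷ c - a ▷ (b ▷ c)` is minus the
number of pairs of incomparable edges cutting off `a` and `b`, which is symmetric in `a` and `b`.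
-/

open Function

namespace PreTree

variable {S : Type} {n : ℕ}

lemma iterate_parent_eq_zero (t : PreTree S n) {i : Fin (n+1)} {k : ℕ} (hk : (i : ℕ) ≤ k) :
    (t.1.1)^[k] i = 0 := by
  induction i using WellFoundedLT.induction generalizing k with
  | _ i ih =>
    rcases eq_or_ne i 0 with rfl | hi
    · exact iterate_fixed t.2.1 k
    · obtain ⟨k, rfl⟩ : ∃ k', k = k' + 1 := ⟨k - 1, by have := Fin.pos_iff_ne_zero.2 hi; omega⟩
      have := t.2.2 i hi
      rw [iterate_succ_apply]
      exact ih _ this (by omega)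

lemma desc_iff (t : PreTree S n) {v i : Fin (n+1)} : desc t v i ↔ ∃ k, (t.1.1)^[k] i = v := by
  refine ⟨fun ⟨k, _, hk⟩ => ⟨k, hk⟩, fun ⟨k, hk⟩ => ?_⟩
  rcases le_or_gt k (n+1) with h | h
  · exact ⟨k, Finset.mem_range.2 (by omega), hk⟩
  · refine ⟨n+1, Finset.mem_range.2 (by omega), ?_⟩
    rw [← hk, iterate_parent_eq_zero t (by omega), iterate_parent_eq_zero t (by omega)]

lemma desc_refl (t : PreTree S n) (v : Fin (n+1)) : desc t v v :=
  t.desc_iff.2 ⟨0, rfl⟩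

lemma desc_trans (t : PreTree S n) {u v i : Fin (n+1)} (huv : desc t u v) (hvi : desc t v i) :
    desc t u i := by
  obtain ⟨k₁, hk₁⟩ := t.desc_iff.1 huv
  obtain ⟨k₂, hk₂⟩ := t.desc_iff.1 hvi
  exact t.desc_iff.2 ⟨k₁ + k₂, by rw [iterate_add_apply, hk₂, hk₁]⟩

lemma le_of_desc (t : PreTree S n) {v i : Fin (n+1)} (h : desc t v i) : v ≤ i := by
  obtain ⟨k, rfl⟩ := t.desc_iff.1 h
  clear h
  induction k with
  | zero => exact le_rfl
  | succ k ih =>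
    rw [iterate_succ_apply']
    refine le_trans ?_ ih
    rcases eq_or_ne ((t.1.1)^[k] i) 0 with h0 | h0
    · rw [h0, t.2.1]
    · exact (t.2.2 _ h0).le

lemma desc_antisymm (t : PreTree S n) {v w : Fin (n+1)} (h₁ : desc t v w) (h₂ : desc t w v) :
    v = w :=
  le_antisymm (t.le_of_desc h₁) (t.le_of_desc h₂)

lemma ne_zero_of_desc (t : PreTree S n) {v i : Fin (n+1)} (hv : v ≠ 0) (h : desc t v i) :
    i ≠ 0 := by
  rintro rfl
  exact hv (Fin.le_zero_iff.1 (t.le_of_desc h))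

lemma desc_of_desc_parent (t : PreTree S n) {v i : Fin (n+1)} (h : desc t v (t.1.1 i)) :
    desc t v i := by
  obtain ⟨k, hk⟩ := t.desc_iff.1 h
  exact t.desc_iff.2 ⟨k + 1, by rwa [iterate_succ_apply]⟩

lemma desc_parent_of_ne (t : PreTree S n) {v i : Fin (n+1)} (h : desc t v i) (hne : i ≠ v) :
    desc t v (t.1.1 i) := by
  obtain ⟨_ | k, hk⟩ := t.desc_iff.1 h
  · exact absurd hk hne
  · exact t.desc_iff.2 ⟨k, by rwa [← iterate_succ_apply]⟩

lemma desc_total (t : PreTree S n) {v w j : Fin (n+1)} (hv : desc t v j) (hw : desc t w j) :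
    desc t v w ∨ desc t w v := by
  obtain ⟨k₁, rfl⟩ := t.desc_iff.1 hv
  obtain ⟨k₂, rfl⟩ := t.desc_iff.1 hw
  rcases le_total k₁ k₂ with h | h
  · obtain ⟨d, rfl⟩ := Nat.exists_eq_add_of_le h
    exact Or.inr (t.desc_iff.2 ⟨d, by rw [← iterate_add_apply, Nat.add_comm d]⟩)
  · obtain ⟨d, rfl⟩ := Nat.exists_eq_add_of_le h
    exact Or.inl (t.desc_iff.2 ⟨d, by rw [← iterate_add_apply, Nat.add_comm d]⟩)

end PreTree

section Embeddings

variable {S : Type} {k K m : ℕ}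

def IsTreeHom (t : PreTree S k) (s : PreTree S m) (f : Fin (k+1) → Fin (m+1)) : Prop :=
  (∀ i, i ≠ 0 → s.1.1 (f i) = f (t.1.1 i)) ∧ ∀ i, s.1.2 (f i) = t.1.2 i

def IsoOn (t : PreTree S k) (s : PreTree S m) (D : Set (Fin (m+1))) (r : Fin (m+1)) : Prop :=
  ∃ f : Fin (k+1) → Fin (m+1),
    Injective f ∧ f 0 = r ∧ (∀ j, j ∈ D ↔ ∃ i, f i = j) ∧ IsTreeHom t s f

lemma isoBelow_iff_isoOn {t : PreTree S k} {s : PreTree S m} {v : Fin (m+1)} :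
    IsoBelow t s v ↔ IsoOn t s {j | desc s v j} v :=
  Iff.rfl

lemma isoAbove_iff_isoOn {t : PreTree S k} {s : PreTree S m} {v : Fin (m+1)} :
    IsoAbove t s v ↔ IsoOn t s {j | ¬ desc s v j} 0 :=
  Iff.rfl

namespace IsTreeHom

variable {t : PreTree S k} {T : PreTree S K} {s : PreTree S m} {f : Fin (K+1) → Fin (m+1)}
  {g : Fin (k+1) → Fin (K+1)}

lemma id (T : PreTree S K) : IsTreeHom T T id :=
  ⟨fun _ _ => rfl, fun _ => rfl⟩

lemma desc_root (hf : IsTreeHom T s f) (i : Fin (K+1)) : desc s (f 0) (f i) := by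
  induction i using WellFoundedLT.induction with
  | _ i ih =>
    rcases eq_or_ne i 0 with rfl | hi
    · exact s.desc_refl _
    · exact s.desc_of_desc_parent (by rw [hf.1 i hi]; exact ih _ (T.2.2 i hi))

lemma map_ne_zero (hf : IsTreeHom T s f) (hinj : Injective f) {i : Fin (K+1)} (hi : i ≠ 0) :
    f i ≠ 0 := by
  intro h
  have h0 : f 0 = 0 := Fin.le_zero_iff.1 (h ▸ s.le_of_desc (hf.desc_root i))
  exact hi (hinj (h.trans h0.symm))

lemma desc_iff (hf : IsTreeHom T s f) (hinj : Injective f) {u j : Fin (K+1)} :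
    desc s (f u) (f j) ↔ desc T u j := by
  induction j using WellFoundedLT.induction with
  | _ j ih =>
    rcases eq_or_ne j u with rfl | hju
    · exact iff_of_true (s.desc_refl _) (T.desc_refl _)
    constructor
    · intro h
      have hj : j ≠ 0 := by
        rintro rfl
        exact hju (hinj (s.desc_antisymm h (hf.desc_root u))).symm
      have h' := s.desc_parent_of_ne h (hinj.ne hju)
      rw [hf.1 j hj] at h'
      exact T.desc_of_desc_parent ((ih _ (T.2.2 j hj)).1 h')
    · intro h
      have hj : j ≠ 0 := by
        rintro rfl
        exact hju (Fin.le_zero_iff.1 (T.le_of_desc h)).symm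
      refine s.desc_of_desc_parent ?_
      rw [hf.1 j hj]
      exact (ih _ (T.2.2 j hj)).2 (T.desc_parent_of_ne h hju)

lemma comp (hf : IsTreeHom T s f) (hg : IsTreeHom t T g) (hginj : Injective g) :
    IsTreeHom t s (f ∘ g) :=
  ⟨fun i hi => by rw [comp_apply, hf.1 _ (hg.map_ne_zero hginj hi), hg.1 i hi]; rfl,
    fun i => (hf.2 _).trans (hg.2 i)⟩

lemma of_comp (hf : IsTreeHom T s f) (hfinj : Injective f) (hfg : IsTreeHom t s (f ∘ g))
    (hfginj : Injective (f ∘ g)) : IsTreeHom t T g := by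
  refine ⟨fun i hi => hfinj ?_, fun i => (hf.2 (g i)).symm.trans (hfg.2 i)⟩
  have hgi : g i ≠ 0 := by
    intro h0
    have hroot : desc s (f (g 0)) (f 0) := by simpa [h0] using hfg.desc_root i
    refine hi (hfginj ?_)
    rw [comp_apply, comp_apply, h0]
    exact (s.desc_antisymm hroot (hf.desc_root (g 0))).symm
  rw [← hf.1 _ hgi]
  exact hfg.1 i hi

lemma image_setOf_desc (hf : IsTreeHom T s f) (hinj : Injective f) (u : Fin (K+1)) :
    f '' {j | desc T u j} = {j | desc s (f u) j} ∩ Set.range f := by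
  ext j
  constructor
  · rintro ⟨i, hi, rfl⟩
    exact ⟨(hf.desc_iff hinj).2 hi, i, rfl⟩
  · rintro ⟨hj, i, rfl⟩
    exact ⟨i, (hf.desc_iff hinj).1 hj, rfl⟩

lemma image_setOf_not_desc (hf : IsTreeHom T s f) (hinj : Injective f) (u : Fin (K+1)) :
    f '' {j | ¬ desc T u j} = Set.range f \ {j | desc s (f u) j} := by
  ext j
  constructor
  · rintro ⟨i, hi, rfl⟩
    exact ⟨⟨i, rfl⟩, mt (hf.desc_iff hinj).1 hi⟩
  · rintro ⟨⟨i, rfl⟩, hj⟩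
    exact ⟨i, mt (hf.desc_iff hinj).2 hj, rfl⟩

lemma isoOn_image_iff (hf : IsTreeHom T s f) (hfinj : Injective f) (E : Set (Fin (K+1)))
    (x : Fin (K+1)) : IsoOn t s (f '' E) (f x) ↔ IsoOn t T E x := by
  constructor
  · rintro ⟨g, hginj, hg0, hgE, hg⟩
    choose g' hg'E hg' using fun i => (hgE (g i)).2 ⟨i, rfl⟩
    have hfg' : f ∘ g' = g := funext hg'
    refine ⟨g', fun i₁ i₂ h => hginj (by rw [← hg', ← hg', h]), hfinj (by rw [hg', hg0]),
      fun j => ⟨fun hj => ?_, fun ⟨i, hi⟩ => hi ▸ hg'E i⟩,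
      hf.of_comp hfinj (hfg' ▸ hg) (hfg' ▸ hginj)⟩
    obtain ⟨i, hi⟩ := (hgE (f j)).1 ⟨j, hj, rfl⟩
    exact ⟨i, hfinj ((hg' i).trans hi)⟩
  · rintro ⟨g, hginj, hg0, hgE, hg⟩
    refine ⟨f ∘ g, hfinj.comp hginj, congrArg f hg0, fun j => ?_, hf.comp hg hginj⟩
    simp only [Set.mem_image, hgE, comp_apply]
    exact ⟨fun ⟨_, ⟨i, hi⟩, hj⟩ => ⟨i, hi ▸ hj⟩, fun ⟨i, hi⟩ => ⟨g i, ⟨i, rfl⟩, hi⟩⟩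

end IsTreeHom

namespace IsoOn

variable {T₁ T₂ t : PreTree S k} {s : PreTree S m} {D : Set (Fin (m+1))} {r : Fin (m+1)}

lemma of_treeRel (h : IsoOn T₂ s D r) (hrel : treeRel T₁ T₂) : IsoOn T₁ s D r := by
  obtain ⟨e, he0, hep, hec⟩ := hrel
  obtain ⟨f, hfinj, hf0, hfD, hf⟩ := h
  refine ⟨f ∘ e, hfinj.comp e.injective, by rw [comp_apply, he0, hf0], fun j => ?_,
    hf.comp ⟨hep, hec⟩ e.injective⟩
  rw [hfD]
  exact e.surjective.exists

lemma treeRel_of_isoOn (h₁ : IsoOn T₁ s D r) (h₂ : IsoOn T₂ s D r) : treeRel T₁ T₂ := by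
  obtain ⟨f₁, hf₁inj, hf₁0, hf₁D, hf₁⟩ := h₁
  obtain ⟨f₂, hf₂inj, hf₂0, hf₂D, hf₂⟩ := h₂
  choose e he using fun i => (hf₂D (f₁ i)).1 ((hf₁D _).2 ⟨i, rfl⟩)
  have hcomp : f₂ ∘ e = f₁ := funext he
  have heinj : Injective e := fun i₁ i₂ h => hf₁inj (by rw [← he, ← he, h])
  have hhom : IsTreeHom T₁ T₂ e := hf₂.of_comp hf₂inj (hcomp ▸ hf₁) (hcomp ▸ hf₁inj)
  exact ⟨Equiv.ofBijective e (Finite.injective_iff_bijective.1 heinj),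
    hf₂inj ((he 0).trans (hf₁0.trans hf₂0.symm)), hhom.1, hhom.2⟩

lemma ncard_eq (h : IsoOn t s D r) : D.ncard = k + 1 := by
  obtain ⟨f, hfinj, -, hfD, -⟩ := h
  rw [show D = Set.range f from Set.ext hfD, Set.ncard_range_of_injective hfinj, Nat.card_fin]

end IsoOn

end Embeddings

section Classes

variable {S : Type} {N : ℕ}

lemma treeRel_equivalence : Equivalence (@treeRel S N) where
  refl _ := ⟨Equiv.refl _, rfl, fun _ _ => rfl, fun _ => rfl⟩
  symm := by
    rintro T₁ T₂ ⟨e, he0, hep, hec⟩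
    have he' : IsTreeHom T₂ T₁ e.symm := IsTreeHom.of_comp ⟨hep, hec⟩ e.injective
      (by simpa using IsTreeHom.id T₂) (by simpa using injective_id)
    exact ⟨e.symm, e.symm_apply_eq.2 he0.symm, he'.1, he'.2⟩
  trans := by
    rintro T₁ T₂ T₃ ⟨e₁, he₁0, he₁p, he₁c⟩ ⟨e₂, he₂0, he₂p, he₂c⟩
    have he : IsTreeHom T₁ T₃ (e₂ ∘ e₁) :=
      IsTreeHom.comp ⟨he₂p, he₂c⟩ ⟨he₁p, he₁c⟩ e₁.injective
    exact ⟨e₁.trans e₂, by simp [he₁0, he₂0], he.1, he.2⟩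

lemma sum_tclass_ite_eq [Fintype S] [DecidableEq S] (P : PreTree S N → Prop) [DecidablePred P]
    (F : PreTree S N → ℕ) (n : ℕ) (hP : ∀ T T', treeRel T T' → P T' → P T)
    (huniq : ∀ T T', P T → P T' → treeRel T T') (hF : ∀ T, P T → F T = n)
    (hn : (∀ T, ¬ P T) → n = 0) :
    ∑ T : TClass S N, (if P T.out then F T.out else 0) = n := by
  by_cases hex : ∃ T, P T
  · obtain ⟨T₀, hT₀⟩ := hex
    set C : TClass S N := Quot.mk treeRel T₀
    have hout : P C.out :=
      hP _ _ ((treeRel_equivalence.eqvGen_iff).1 (Quot.eq.1 (Quot.out_eq _))) hT₀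
    rw [Fintype.sum_eq_single C, if_pos hout, hF _ hout]
    intro T hT
    refine if_neg fun hPT => hT ?_
    rw [← Quot.out_eq T]
    exact Quot.sound (huniq _ _ hPT hT₀)
  · simp only [not_exists] at hex
    rw [hn hex]
    exact Finset.sum_eq_zero fun T _ => if_neg (hex _)

end Classes

section Existence

variable {S : Type} {m N : ℕ}

lemma exists_isoOn (s : PreTree S m) {D : Set (Fin (m+1))} (hcard : D.ncard = N + 1)
    {r : Fin (m+1)} (hr : r ∈ D) (hmin : ∀ j ∈ D, r ≤ j) (hcl : ∀ j ∈ D, j ≠ r → s.1.1 j ∈ D) :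
    ∃ T : PreTree S N, IsoOn T s D r := by
  classical
  have hcard' : Fintype.card D = N + 1 := by
    rw [← Nat.card_eq_fintype_card, Nat.card_coe_set_eq, hcard]
  -- numbering `D` increasingly keeps every parent below its child
  let e : Fin (N+1) ≃o D := Fintype.orderIsoFinOfCardEq D hcard'
  let pos : Fin (m+1) → Fin (N+1) := fun j => if h : j ∈ D then e.symm ⟨j, h⟩ else 0
  have hpos : ∀ j ∈ D, (e (pos j) : Fin (m+1)) = j := fun j hj => by simp [pos, hj]
  have he0 : (e 0 : Fin (m+1)) = r := by
    refine le_antisymm ?_ (hmin _ (e 0).2)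
    rw [← hpos r hr]
    exact e.monotone (Fin.zero_le _)
  have hlt : ∀ i, i ≠ 0 → r < e i := fun i hi =>
    he0 ▸ e.strictMono (Fin.pos_of_ne_zero hi)
  have hpar : ∀ i, i ≠ 0 → s.1.1 (e i) ∈ D := fun i hi => hcl _ (e i).2 (hlt i hi).ne'
  let par : Fin (N+1) → Fin (N+1) := fun i => if i = 0 then 0 else pos (s.1.1 (e i))
  have hpar_lt : ∀ i, i ≠ 0 → par i < i := fun i hi => by
    have hei : (e i : Fin (m+1)) ≠ 0 := (lt_of_le_of_lt (Fin.zero_le r) (hlt i hi)).ne'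
    simp only [par, if_neg hi]
    rw [← e.lt_iff_lt, ← Subtype.coe_lt_coe, hpos _ (hpar i hi)]
    exact s.2.2 _ hei
  have hpar0 : par 0 = 0 := if_pos rfl
  let T : PreTree S N := ⟨(par, fun i => s.1.2 (e i)), hpar0, hpar_lt⟩
  refine ⟨T, fun i => e i, Subtype.val_injective.comp e.injective, he0,
    fun j => ⟨fun hj => ⟨pos j, hpos j hj⟩, fun ⟨i, hi⟩ => hi ▸ (e i).2⟩,
    fun i hi => ?_, fun i => rfl⟩
  simp only [T, par, if_neg hi, hpos _ (hpar i hi)]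

lemma exists_isoBelow (s : PreTree S m) (w : Fin (m+1))
    (hcard : {j | desc s w j}.ncard = N + 1) : ∃ T : PreTree S N, IsoBelow T s w :=
  exists_isoOn s hcard (s.desc_refl w) (fun _ => s.le_of_desc) (fun _ => s.desc_parent_of_ne)

lemma exists_isoAbove (s : PreTree S m) {v : Fin (m+1)} (hv : v ≠ 0)
    (hcard : {j | ¬ desc s v j}.ncard = N + 1) : ∃ T : PreTree S N, IsoAbove T s v :=
  exists_isoOn s hcard (fun h => s.ne_zero_of_desc hv h rfl) (fun j _ => Fin.zero_le j)
    (fun _ hj _ h => hj (s.desc_of_desc_parent h))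

end Existence

section Cuts

variable {S : Type} {p q r m : ℕ}

def IsoBetween (b : PreTree S q) (s : PreTree S m) (v w : Fin (m+1)) : Prop :=
  IsoOn b s ({j | desc s w j} \ {j | desc s v j}) w

def IsoOutside (c : PreTree S r) (s : PreTree S m) (v w : Fin (m+1)) : Prop :=
  IsoOn c s ({j | ¬ desc s v j} \ {j | desc s w j}) 0

instance [DecidableEq S] (b : PreTree S q) (s : PreTree S m) (v w : Fin (m+1)) :
    Decidable (IsoBetween b s v w) := by
  unfold IsoBetween IsoOn IsTreeHom; infer_instance

instance [DecidableEq S] (c : PreTree S r) (s : PreTree S m) (v w : Fin (m+1)) :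
    Decidable (IsoOutside c s v w) := by
  unfold IsoOutside IsoOn IsTreeHom; infer_instance

variable {a : PreTree S p} {b : PreTree S q} {c : PreTree S r} {s : PreTree S m}
  {v w : Fin (m+1)}

lemma isoBetween_iff_isoBelow (hvw : ¬ desc s v w) (hwv : ¬ desc s w v) :
    IsoBetween b s v w ↔ IsoBelow b s w := by
  have hD : {j | desc s w j} \ {j | desc s v j} = {j | desc s w j} :=
    Set.ext fun j => ⟨And.left, fun hwj => ⟨hwj, fun hvj => (s.desc_total hvj hwj).elim hvw hwv⟩⟩
  rw [IsoBetween, hD]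
  rfl

lemma isoOutside_iff_isoAbove (hwv : desc s w v) : IsoOutside c s v w ↔ IsoAbove c s w := by
  have hD : {j | ¬ desc s v j} \ {j | desc s w j} = {j | ¬ desc s w j} :=
    Set.ext fun j => ⟨And.right, fun hwj => ⟨fun hvj => hwj (s.desc_trans hwv hvj), hwj⟩⟩
  rw [IsoOutside, hD]
  rfl

lemma isoOutside_comm : IsoOutside c s v w ↔ IsoOutside c s w v := by
  rw [IsoOutside, IsoOutside, Set.sdiff_eq, Set.sdiff_eq, Set.inter_comm]
  rfl

lemma nested_or_disjoint_iff :
    ((w ≠ 0 ∧ IsoAbove c s w) ∧ desc s w v ∧ v ≠ w ∧ IsoBelow a s v ∧ IsoBetween b s v w) ∨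
      ((v ≠ 0 ∧ IsoBelow a s v) ∧
        w ≠ 0 ∧ ¬ desc s v w ∧ ¬ desc s w v ∧ IsoBelow b s w ∧ IsoOutside c s v w) ↔
    (v ≠ 0 ∧ IsoBelow a s v) ∧
      ¬ desc s v w ∧ w ≠ 0 ∧ IsoBetween b s v w ∧ IsoOutside c s v w := by
  by_cases hwv : desc s w v
  · rw [isoOutside_iff_isoAbove hwv]
    constructor
    · rintro (⟨⟨hw, hc⟩, -, hne, ha, hb⟩ | ⟨-, -, -, hnwv, -⟩)
      · exact ⟨⟨s.ne_zero_of_desc hw hwv, ha⟩, fun hvw => hne (s.desc_antisymm hvw hwv), hw,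
          hb, hc⟩
      · exact absurd hwv hnwv
    · rintro ⟨⟨-, ha⟩, hnvw, hw, hb, hc⟩
      refine Or.inl ⟨⟨hw, hc⟩, hwv, ?_, ha, hb⟩
      rintro rfl
      exact hnvw (s.desc_refl v)
  · constructor
    · rintro (⟨-, h, -⟩ | ⟨hva, hw, hnvw, hnwv, hb, hc⟩)
      · exact absurd h hwv
      · exact ⟨hva, hnvw, hw, (isoBetween_iff_isoBelow hnvw hnwv).2 hb, hc⟩
    · rintro ⟨hva, hnvw, hw, hb, hc⟩
      exact Or.inr ⟨hva, hw, hnvw, hwv, (isoBetween_iff_isoBelow hnvw hwv).1 hb, hc⟩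

end Cuts

section Counting

open Finset

lemma card_filter_eq_of_injective {α β : Type*} [Fintype α] [Fintype β] {f : α → β}
    (hf : Injective f) {P : α → Prop} {Q : β → Prop} [DecidablePred P] [DecidablePred Q]
    (hPQ : ∀ a, P a ↔ Q (f a)) (hQ : ∀ b, Q b → b ∈ Set.range f) :
    #{a | P a} = #{b | Q b} := by
  refine card_bij (fun a _ => f a) (fun a ha => by simpa [← hPQ] using ha)
    (fun _ _ _ _ h => hf h) (fun b hb => ?_)
  obtain ⟨a, rfl⟩ := hQ b (by simpa using hb)
  exact ⟨a, by simpa [hPQ] using hb, rfl⟩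

lemma sum_mul_card_filter {ι α : Type*} [Fintype ι] [Fintype α] (F : ι → ℕ) (R : α → Prop)
    (P : ι → α → Prop) [DecidablePred R] [∀ i, DecidablePred (P i)] :
    ∑ i, F i * #{x | R x ∧ P i x} = ∑ x, if R x then ∑ i, (if P i x then F i else 0) else 0 := by
  simp only [card_filter, mul_sum, mul_ite, mul_one, mul_zero, ite_and]
  rw [sum_comm]
  simp only [sum_ite_irrel, sum_const_zero]

lemma card_filter_prod_fst {α β : Type*} [Fintype α] [Fintype β] (R : α → Prop)
    (Q : α → β → Prop) [DecidablePred R] [∀ a, DecidablePred (Q a)] :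
    #{x : α × β | R x.1 ∧ Q x.1 x.2} = ∑ a, if R a then #{b | Q a b} else 0 := by
  simp only [card_filter, Fintype.sum_prod_type, ite_and, sum_ite_irrel, sum_const_zero]

lemma card_filter_prod_snd {α β : Type*} [Fintype α] [Fintype β] (R : β → Prop)
    (Q : α → β → Prop) [DecidablePred R] [∀ a, DecidablePred (Q a)] :
    #{x : α × β | R x.2 ∧ Q x.1 x.2} = ∑ b, if R b then #{a | Q a b} else 0 := by
  simp only [card_filter, Fintype.sum_prod_type_right, ite_and, sum_ite_irrel, sum_const_zero]

end Counting

section Grafting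

open Finset

variable {S : Type} {p q r m K : ℕ}
  {a : PreTree S p} {b : PreTree S q} {c : PreTree S r} {s : PreTree S m}

lemma exists_isoBelow_of_isoBetween (hK : K = p + q + 1) {v w : Fin (m+1)}
    (hwv : desc s w v) (ha : IsoBelow a s v) (hb : IsoBetween b s v w) :
    ∃ T : PreTree S K, IsoBelow T s w := by
  refine exists_isoBelow s w ?_
  have hsub : {j | desc s v j} ⊆ {j | desc s w j} := fun _ => s.desc_trans hwv
  rw [← Set.ncard_sdiff_add_ncard_of_subset hsub, hb.ncard_eq,
    (isoBelow_iff_isoOn.1 ha).ncard_eq, hK]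
  ring

lemma exists_isoAbove_of_isoOutside (hK : K = q + r + 1) {v w : Fin (m+1)} (hv : v ≠ 0)
    (hb : IsoBetween b s v w) (hc : IsoOutside c s v w) :
    ∃ T : PreTree S K, IsoAbove T s v := by
  refine exists_isoAbove s hv ?_
  have hsub : {j | desc s w j} \ {j | desc s v j} ⊆ {j | ¬ desc s v j} := fun _ => And.right
  have hrest : {j | ¬ desc s v j} \ ({j | desc s w j} \ {j | desc s v j}) =
      {j | ¬ desc s v j} \ {j | desc s w j} :=
    Set.ext fun j => ⟨fun ⟨hvj, h⟩ => ⟨hvj, fun hwj => h ⟨hwj, hvj⟩⟩,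
      fun ⟨hvj, hwj⟩ => ⟨hvj, fun h => hwj h.1⟩⟩
  rw [← Set.ncard_sdiff_add_ncard_of_subset hsub, hrest, hc.ncard_eq, hb.ncard_eq, hK]
  ring

variable [DecidableEq S]

lemma graftCount_eq_of_isoBelow (a : PreTree S p) (b : PreTree S q) {w : Fin (m+1)}
    {T : PreTree S K} (hT : IsoBelow T s w) :
    graftCount a b T = #{v | desc s w v ∧ v ≠ w ∧ IsoBelow a s v ∧ IsoBetween b s v w} := by
  obtain ⟨f, hfinj, rfl, hfD, hf⟩ := isoBelow_iff_isoOn.1 hT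
  refine card_filter_eq_of_injective hfinj (fun u => ?_) (fun v hv => (hfD v).1 hv.1)
  have hu : desc s (f 0) (f u) := (hfD _).2 ⟨u, rfl⟩
  have hrange : Set.range f = {j | desc s (f 0) j} := (Set.ext hfD).symm
  have hsub : {j | desc s (f u) j} ⊆ {j | desc s (f 0) j} := fun _ => s.desc_trans hu
  rw [isoBelow_iff_isoOn, isoAbove_iff_isoOn, ← hf.isoOn_image_iff hfinj,
    ← hf.isoOn_image_iff hfinj, hf.image_setOf_desc hfinj, hf.image_setOf_not_desc hfinj,
    hrange, Set.inter_eq_left.2 hsub, hfinj.ne_iff]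
  exact ⟨fun ⟨h₁, h₂, h₃⟩ => ⟨hu, h₁, h₂, h₃⟩, fun ⟨_, h₁, h₂, h₃⟩ => ⟨h₁, h₂, h₃⟩⟩

lemma graftCount_eq_of_isoAbove (b : PreTree S q) (c : PreTree S r) {v : Fin (m+1)}
    {T : PreTree S K} (hT : IsoAbove T s v) :
    graftCount b c T =
      #{w | ¬ desc s v w ∧ w ≠ 0 ∧ IsoBetween b s v w ∧ IsoOutside c s v w} := by
  obtain ⟨f, hfinj, hf0, hfD, hf⟩ := isoAbove_iff_isoOn.1 hT
  refine card_filter_eq_of_injective hfinj (fun u => ?_) (fun w hw => (hfD w).1 hw.1)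
  have hu : ¬ desc s v (f u) := (hfD _).2 ⟨u, rfl⟩
  have hne : f u ≠ 0 ↔ u ≠ 0 := by rw [← hf0, hfinj.ne_iff]
  have hrange : Set.range f = {j | ¬ desc s v j} := (Set.ext hfD).symm
  rw [isoBelow_iff_isoOn, isoAbove_iff_isoOn, ← hf.isoOn_image_iff hfinj,
    ← hf.isoOn_image_iff hfinj, hf.image_setOf_desc hfinj, hf.image_setOf_not_desc hfinj,
    hrange, hf0, hne]
  exact ⟨fun ⟨h₁, h₂, h₃⟩ => ⟨hu, h₁, h₂, h₃⟩, fun ⟨_, h₁, h₂, h₃⟩ => ⟨h₁, h₂, h₃⟩⟩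

end Grafting

section PreLie

open Finset

variable {S : Type} [DecidableEq S] {p q r m K : ℕ}

def nestedCuts (a : PreTree S p) (b : PreTree S q) (c : PreTree S r) (s : PreTree S m) :
    Finset (Fin (m+1) × Fin (m+1)) :=
  {x | (x.2 ≠ 0 ∧ IsoAbove c s x.2) ∧
    desc s x.2 x.1 ∧ x.1 ≠ x.2 ∧ IsoBelow a s x.1 ∧ IsoBetween b s x.1 x.2}

def disjointCuts (a : PreTree S p) (b : PreTree S q) (c : PreTree S r) (s : PreTree S m) :
    Finset (Fin (m+1) × Fin (m+1)) :=
  {x | (x.1 ≠ 0 ∧ IsoBelow a s x.1) ∧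
    x.2 ≠ 0 ∧ ¬ desc s x.1 x.2 ∧ ¬ desc s x.2 x.1 ∧ IsoBelow b s x.2 ∧ IsoOutside c s x.1 x.2}

variable (a : PreTree S p) (b : PreTree S q) (c : PreTree S r) (s : PreTree S m)

lemma disjoint_nestedCuts_disjointCuts : Disjoint (nestedCuts a b c s) (disjointCuts a b c s) :=
  disjoint_filter.2 fun _ _ hn hd => hd.2.2.2.1 hn.2.1

lemma nestedCuts_union_disjointCuts :
    nestedCuts a b c s ∪ disjointCuts a b c s =
      ({x | (x.1 ≠ 0 ∧ IsoBelow a s x.1) ∧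
        ¬ desc s x.1 x.2 ∧ x.2 ≠ 0 ∧ IsoBetween b s x.1 x.2 ∧ IsoOutside c s x.1 x.2} :
        Finset (Fin (m+1) × Fin (m+1))) := by
  refine Finset.ext fun x => ?_
  simp only [nestedCuts, disjointCuts, mem_union, mem_filter, mem_univ, true_and]
  exact nested_or_disjoint_iff

lemma card_disjointCuts_comm : #(disjointCuts a b c s) = #(disjointCuts b a c s) := by
  refine card_equiv (Equiv.prodComm _ _) fun x => ?_
  simp only [disjointCuts, mem_filter, mem_univ, true_and, Equiv.prodComm_apply, Prod.fst_swap,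
    Prod.snd_swap, isoOutside_comm (v := x.1)]
  tauto

variable [Fintype S]

lemma sum_tclass_isoBelow (w : Fin (m+1)) (hK : K = p + q + 1) :
    ∑ T : TClass S K, (if IsoBelow T.out s w then graftCount a b T.out else 0) =
      #{v | desc s w v ∧ v ≠ w ∧ IsoBelow a s v ∧ IsoBetween b s v w} := by
  refine sum_tclass_ite_eq _ _ _
    (fun _ _ hrel h => isoBelow_iff_isoOn.2 ((isoBelow_iff_isoOn.1 h).of_treeRel hrel))
    (fun _ _ h₁ h₂ => (isoBelow_iff_isoOn.1 h₁).treeRel_of_isoOn h₂)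
    (fun _ hT => graftCount_eq_of_isoBelow a b hT) fun hno => ?_
  refine card_eq_zero.2 (filter_eq_empty_iff.2 fun v _ hv => ?_)
  obtain ⟨hwv, -, ha, hb⟩ := hv
  obtain ⟨T, hT⟩ := exists_isoBelow_of_isoBetween hK hwv ha hb
  exact hno T hT

lemma sum_tclass_isoAbove {v : Fin (m+1)} (hv : v ≠ 0) (hK : K = q + r + 1) :
    ∑ T : TClass S K, (if IsoAbove T.out s v then graftCount b c T.out else 0) =
      #{w | ¬ desc s v w ∧ w ≠ 0 ∧ IsoBetween b s v w ∧ IsoOutside c s v w} := by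
  refine sum_tclass_ite_eq _ _ _
    (fun _ _ hrel h => isoAbove_iff_isoOn.2 ((isoAbove_iff_isoOn.1 h).of_treeRel hrel))
    (fun _ _ h₁ h₂ => (isoAbove_iff_isoOn.1 h₁).treeRel_of_isoOn h₂)
    (fun _ hT => graftCount_eq_of_isoAbove b c hT) fun hno => ?_
  refine card_eq_zero.2 (filter_eq_empty_iff.2 fun w _ hw => ?_)
  obtain ⟨-, -, hb, hc⟩ := hw
  obtain ⟨T, hT⟩ := exists_isoAbove_of_isoOutside hK hv hb hc
  exact hno T hT

lemma sum_graftCount_mul_graftCount_left (hK : K = p + q + 1) :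
    ∑ T : TClass S K, graftCount a b T.out * graftCount T.out c s = #(nestedCuts a b c s) := by
  have hcount : ∀ T : PreTree S K,
      graftCount T c s = #{w | (w ≠ 0 ∧ IsoAbove c s w) ∧ IsoBelow T s w} := fun T =>
    congrArg card (filter_congr fun _ _ => by tauto)
  simp only [hcount]
  rw [sum_mul_card_filter, nestedCuts, card_filter_prod_snd (fun w => w ≠ 0 ∧ IsoAbove c s w)
    fun v w => desc s w v ∧ v ≠ w ∧ IsoBelow a s v ∧ IsoBetween b s v w]
  simp only [sum_tclass_isoBelow a b s _ hK]

lemma sum_graftCount_mul_graftCount_right (hK : K = q + r + 1) :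
    ∑ T : TClass S K, graftCount b c T.out * graftCount a T.out s =
      #(nestedCuts a b c s) + #(disjointCuts a b c s) := by
  have hcount : ∀ T : PreTree S K,
      graftCount a T s = #{v | (v ≠ 0 ∧ IsoBelow a s v) ∧ IsoAbove T s v} := fun T =>
    congrArg card (filter_congr fun _ _ => and_assoc.symm)
  simp only [hcount]
  rw [sum_mul_card_filter, ← card_union_of_disjoint (disjoint_nestedCuts_disjointCuts a b c s),
    nestedCuts_union_disjointCuts, card_filter_prod_fst (fun v => v ≠ 0 ∧ IsoBelow a s v)
    fun v w => ¬ desc s v w ∧ w ≠ 0 ∧ IsoBetween b s v w ∧ IsoOutside c s v w]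
  exact sum_congr rfl fun v _ =>
    if_ctx_congr Iff.rfl (fun hv => sum_tclass_isoAbove b c s hv.1 hK) fun _ => rfl

end PreLie

/-- The grafting product `t₁ ▷ t₂ = ∑_s n(t₁,t₂,s) s` on the free vector
space on isomorphism classes of `S`-colored rooted trees, where `n(t₁,t₂,s)` counts
edges `e` of `s` with lower subtree `P_e(s) ≅ t₁` and root component `R_e(s) ≅ t₂`,
is a left pre-Lie structure.  Stated coefficientwise: for all trees `a, b, c` and
every tree `s`, the coefficient of (the class of) `s` in
`(a ▷ b) ▷ c - a ▷ (b ▷ c)` equals that in `(b ▷ a) ▷ c - b ▷ (a ▷ c)`, where e.g.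
the coefficient of `s` in `(a ▷ b) ▷ c` is `∑_{[T]} n(a,b,T) n(T,c,s)`, the sum
running over isomorphism classes `[T]` of trees with `|a| + |b|` vertices. -/
theorem stmt7 (S : Type) [Fintype S] [DecidableEq S] {p q r m : ℕ}
    (a : PreTree S p) (b : PreTree S q) (c : PreTree S r) (s : PreTree S m) :
    ((∑ T : TClass S (p + q + 1), (graftCount a b T.out * graftCount T.out c s : ℤ))
      - ∑ T : TClass S (q + r + 1), (graftCount b c T.out * graftCount a T.out s : ℤ))
    =
    ((∑ T : TClass S (p + q + 1), (graftCount b a T.out * graftCount T.out c s : ℤ))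
      - ∑ T : TClass S (p + r + 1), (graftCount a c T.out * graftCount b T.out s : ℤ)) := by
  have habc := sum_graftCount_mul_graftCount_left a b c s rfl
  have hbac := sum_graftCount_mul_graftCount_left b a c s (show p + q + 1 = q + p + 1 by omega)
  simp only [← Nat.cast_mul, ← Nat.cast_sum, habc, hbac,
    sum_graftCount_mul_graftCount_right a b c s rfl,
    sum_graftCount_mul_graftCount_right b a c s rfl, card_disjointCuts_comm a b c s]
  push_cast
  ring
end

section
/- Let $\n$ be the vector space over $\mathbb{Q}$ with basis $\{a_{i,k} : i \in \{1,2\}, k \geq 1\}$ with bracket determined by: $[a_{i,2k}, a_{j,2l}] = 0$; $[a_{i,2k}, a_{j,2l+1}] = -a_{j,2(k+l)+1}$ if $i = j$ and $= a_{j,2(k+l)+1}$ if $i \neq j$; and $[a_{i,2k+1}, a_{j,2l+1}] = a_{j,2(k+l+1)} - a_{i,2(k+l+1)}$. Then the map $\phi$ with $\phi(a_{1,2k+1}) = e \otimes t^k$, $\phi(a_{2,2k+1}) = f \otimes t^{k+1}$, $\phi(a_{1,2k}) = -h_1 \otimes t^k$, $\phi(a_{2,2k}) = -h_2 \otimes t^k$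 is a Lie algebra isomorphism onto $L\mathfrak{gl}_2^+ = \mathbb{Q}e \oplus (\mathfrak{gl}_2 \otimes t\mathbb{Q}[t])$. -/
/-!
Every generator is sent to a signed matrix monomial: `a_{i,2k} ↦ -E_{ii} t^k`,
`a_{1,2k+1} ↦ E_{12} t^k`, `a_{2,2k+1} ↦ E_{21} t^{k+1}`. The positions `(t^d, E_{ab})` hit in
this way are pairwise distinct, and they are exactly those allowed in `L𝔤𝔩₂⁺`: all of them
except `E_{11}, E_{22}, E_{21}` in degree `0`. Since the matrix monomials form a `ℚ`-basis of
`Mat₂(ℚ[t])`, `φ` is injective with the stated range. The bracket relations are products of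
matrix units.
-/

open Polynomial

namespace Matrix
variable (R m n : Type*) [CommSemiring R] [Fintype m] [Finite n]

noncomputable def monomialBasis : Module.Basis (ℕ × m × n) R (Matrix m n R[X]) :=
  (basisMonomials R).smulTower (stdBasis R[X] m n)

variable {R m n}

@[simp]
theorem monomialBasis_apply [DecidableEq m] [DecidableEq n] (d : ℕ) (i : m) (j : n) :
    monomialBasis R m n (d, i, j) = single i j (X ^ d) := by
  simp [monomialBasis, Module.Basis.smulTower_apply, stdBasis_eq_single, smul_single,
    X_pow_eq_monomial]

@[simp]
theorem monomialBasis_repr (A : Matrix m n R[X]) (d : ℕ) (i : m) (j : n) :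
    (monomialBasis R m n).repr A (d, i, j) = (A i j).coeff d :=
  rfl

end Matrix

open Matrix

namespace LoopGl2

noncomputable def ladder (i : Fin 2) (m : ℕ) : Matrix (Fin 2) (Fin 2) ℚ[X] :=
  if m % 2 = 1 then
    (if i = 0 then single 0 1 (X ^ (m / 2)) else single 1 0 (X ^ (m / 2 + 1)))
  else
    (if i = 0 then -single 0 0 (X ^ (m / 2)) else -single 1 1 (X ^ (m / 2)))

theorem ladder_even (i : Fin 2) (k : ℕ) : ladder i (2 * k) = -single i i (X ^ k) := by
  fin_cases i <;> simp [ladder]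

theorem ladder_zero_odd (k : ℕ) : ladder 0 (2 * k + 1) = single 0 1 (X ^ k) := by
  simp [ladder, Nat.add_mod, Nat.mul_add_div]

theorem ladder_one_odd (k : ℕ) : ladder 1 (2 * k + 1) = single 1 0 (X ^ (k + 1)) := by
  simp [ladder, Nat.add_mod, Nat.mul_add_div]

-- `(d, a, b)` stands for the matrix monomial `E_{ab} t^d`, with `0`-based indices `a, b`.
def ladderSign (x : ℕ × Fin 2 × Fin 2) : ℚˣ := if x.2.1 = x.2.2 then -1 else 1

-- Rescaling the diagonal matrix units by `-1` turns every generator into a basis vector.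
noncomputable def ladderBasis :
    Module.Basis (ℕ × Fin 2 × Fin 2) ℚ (Matrix (Fin 2) (Fin 2) ℚ[X]) :=
  (monomialBasis ℚ (Fin 2) (Fin 2)).unitsSMul ladderSign

def ladderPos (p : Fin 2 × ℕ) : ℕ × Fin 2 × Fin 2 :=
  if p.2 % 2 = 0 then (p.2 / 2, p.1, p.1)
  else if p.1 = 0 then (p.2 / 2, 0, 1) else (p.2 / 2 + 1, 1, 0)

theorem ladder_eq_ladderBasis (i : Fin 2) (m : ℕ) :
    ladder i m = ladderBasis (ladderPos (i, m)) := by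
  obtain ⟨k, rfl | rfl⟩ := Nat.even_or_odd' m <;> fin_cases i <;>
    simp [ladderBasis, ladderPos, ladderSign, ladder_even, ladder_zero_odd, ladder_one_odd,
      Nat.add_mod, Nat.mul_add_div, Module.Basis.unitsSMul_apply, Units.smul_def, single_neg]

theorem ladderPos_injective : Function.Injective ladderPos := by
  rintro ⟨i, m⟩ ⟨j, n⟩ h
  grind [ladderPos]

theorem range_ladderPos :
    Set.range (fun p : {p : Fin 2 × ℕ // 1 ≤ p.2} => ladderPos p.1) =
      {x | x.1 = 0 → x.2 = (0, 1)} := by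
  ext ⟨d, a, b⟩
  constructor
  · rintro ⟨⟨⟨i, m⟩, hm⟩, h⟩
    grind [ladderPos]
  · intro h
    fin_cases a <;> fin_cases b
    · exact ⟨⟨(0, 2 * d), by grind⟩, by grind [ladderPos]⟩
    · exact ⟨⟨(0, 2 * d + 1), by omega⟩, by grind [ladderPos]⟩
    · exact ⟨⟨(1, 2 * d - 1), by grind⟩, by grind [ladderPos]⟩
    · exact ⟨⟨(1, 2 * d), by grind⟩, by grind [ladderPos]⟩

theorem linearIndependent_ladder :
    LinearIndependent ℚ (fun p : {p : Fin 2 × ℕ // 1 ≤ p.2} => ladder p.1.1 p.1.2) := by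
  simp only [ladder_eq_ladderBasis]
  exact ladderBasis.linearIndependent.comp _ (ladderPos_injective.comp Subtype.val_injective)

theorem range_linearCombination_ladder :
    Set.range (Finsupp.linearCombination ℚ
      (fun p : {p : Fin 2 × ℕ // 1 ≤ p.2} => ladder p.1.1 p.1.2))
      = {A : Matrix (Fin 2) (Fin 2) ℚ[X] |
          (A 0 0).coeff 0 = 0 ∧ (A 1 1).coeff 0 = 0 ∧ (A 1 0).coeff 0 = 0} := by
  simp only [ladder_eq_ladderBasis]
  rw [← LinearMap.coe_range, Finsupp.range_linearCombination, Set.range_comp' ladderBasis,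
    range_ladderPos]
  ext A
  simp only [SetLike.mem_coe, Module.Basis.mem_span_image, Set.subset_def,
    Finsupp.mem_support_iff, Prod.forall, ladderBasis, Module.Basis.repr_unitsSMul,
    Matrix.monomialBasis_repr, Set.mem_ofPred_eq, Units.smul_def, smul_eq_mul]
  simp only [Units.val_inv_eq_inv_val, ne_eq, mul_eq_zero, inv_eq_zero, Units.ne_zero, false_or,
    Prod.mk.injEq, forall_and, Fin.forall_fin_two, zero_ne_one, imp_false, not_imp_not,
    implies_true, and_true, one_ne_zero, true_and, forall_eq]
  tauto

theorem ladder_even_commutator (i j : Fin 2) (k l : ℕ) :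
    ladder i (2 * k) * ladder j (2 * l) - ladder j (2 * l) * ladder i (2 * k) = 0 := by
  rw [ladder_even, ladder_even]
  fin_cases i <;> fin_cases j <;> simp [single_mul_single_same, single_mul_single_of_ne, mul_comm]

theorem ladder_even_odd_commutator (i j : Fin 2) (k l : ℕ) :
    ladder i (2 * k) * ladder j (2 * l + 1) - ladder j (2 * l + 1) * ladder i (2 * k) =
      if i = j then -ladder j (2 * (k + l) + 1) else ladder j (2 * (k + l) + 1) := by
  fin_cases i <;> fin_cases j <;>
    simp only [Fin.zero_eta, Fin.mk_one, ladder_even, ladder_zero_odd, ladder_one_odd] <;>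
    simp [single_mul_single_same, single_mul_single_of_ne, pow_add, mul_comm,
      mul_left_comm]

theorem ladder_odd_commutator (i j : Fin 2) (k l : ℕ) :
    ladder i (2 * k + 1) * ladder j (2 * l + 1) - ladder j (2 * l + 1) * ladder i (2 * k + 1) =
      ladder j (2 * (k + l + 1)) - ladder i (2 * (k + l + 1)) := by
  fin_cases i <;> fin_cases j <;>
    simp only [Fin.zero_eta, Fin.mk_one, ladder_even, ladder_zero_odd, ladder_one_odd] <;>
    simp [single_mul_single_same, single_mul_single_of_ne, pow_add, mul_comm, mul_left_comm,
      mul_assoc, neg_add_eq_sub]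

end LoopGl2

/-- Let `𝔫` have basis `{a_{i,m} : i ∈ {1,2}, m ≥ 1}` with the bracket of
the two-colored alternating-ladder Lie algebra.  The map `φ` with
`φ(a_{1,2k+1}) = e ⊗ t^k`, `φ(a_{2,2k+1}) = f ⊗ t^{k+1}`, `φ(a_{1,2k}) = -h₁ ⊗ t^k`,
`φ(a_{2,2k}) = -h₂ ⊗ t^k` is a Lie algebra isomorphism onto
`L𝔤𝔩₂⁺ = ℚe ⊕ (𝔤𝔩₂ ⊗ tℚ[t])`, realised inside the `2 × 2` matrices over `ℚ[t]` as the
matrices whose `(0,0)`, `(1,1)` and `(1,0)` entries have zero constant term: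
`φ` (the linear extension of `M`) is injective, its range is exactly `L𝔤𝔩₂⁺`, and the
commutators of the images realise exactly the stated bracket relations. -/
theorem stmt11 (M : Fin 2 → ℕ → Matrix (Fin 2) (Fin 2) (Polynomial ℚ))
    (hM : ∀ (i : Fin 2) (m : ℕ),
      M i m =
        if m % 2 = 1 then
          (if i = 0 then Matrix.single 0 1 (Polynomial.X ^ (m / 2))
           else Matrix.single 1 0 (Polynomial.X ^ (m / 2 + 1)))
        else
          (if i = 0 then -(Matrix.single 0 0 (Polynomial.X ^ (m / 2)))
           else -(Matrix.single 1 1 (Polynomial.X ^ (m / 2))))) :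
    -- φ is injective (the images of the basis vectors are linearly independent)
    Function.Injective (Finsupp.linearCombination ℚ
      (fun p : {p : Fin 2 × ℕ // 1 ≤ p.2} => M p.1.1 p.1.2)) ∧
    -- the image is exactly L𝔤𝔩₂⁺
    Set.range (Finsupp.linearCombination ℚ
      (fun p : {p : Fin 2 × ℕ // 1 ≤ p.2} => M p.1.1 p.1.2))
      = {A : Matrix (Fin 2) (Fin 2) (Polynomial ℚ) |
          (A 0 0).coeff 0 = 0 ∧ (A 1 1).coeff 0 = 0 ∧ (A 1 0).coeff 0 = 0} ∧
    -- φ intertwines the bracket of 𝔫 with the commutator: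
    (∀ (i j : Fin 2) (k l : ℕ), 1 ≤ k → 1 ≤ l →
      M i (2*k) * M j (2*l) - M j (2*l) * M i (2*k) = 0) ∧
    (∀ (i j : Fin 2) (k l : ℕ), 1 ≤ k →
      M i (2*k) * M j (2*l+1) - M j (2*l+1) * M i (2*k) =
        if i = j then -(M j (2*(k+l)+1)) else M j (2*(k+l)+1)) ∧
    (∀ (i j : Fin 2) (k l : ℕ),
      M i (2*k+1) * M j (2*l+1) - M j (2*l+1) * M i (2*k+1) =
        M j (2*(k+l+1)) - M i (2*(k+l+1))) := by
  obtain rfl : M = LoopGl2.ladder := funext fun i => funext (hM i)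
  exact ⟨LoopGl2.linearIndependent_ladder.finsuppLinearCombination_injective,
    LoopGl2.range_linearCombination_ladder,
    fun i j k l _ _ => LoopGl2.ladder_even_commutator i j k l,
    fun i j k l _ => LoopGl2.ladder_even_odd_commutator i j k l,
    LoopGl2.ladder_odd_commutator⟩
end

section
/- Let $\n$ be the vector space with basis $\{y_{i,j} : (i,j) \in \mathbb{N}^2 \setminus \{(0,0)\}\}$ with bracket given by the nonzero relations $[y_{i,0}, y_{0,n}] = -y_{i,n}$ (for $i,n > 0$), $[y_{i,0}, y_{m,n}] = -y_{m+i,n}$ for $m, n > 0$, $[y_{0,j}, y_{m,n}] = y_{m,n+j}$ for $m, n > 0$ (all other brackets of basis elements zero, extended antisymmetrically). Then this bracket satisfies the Jacobi identity, so $\n$ is a Lie algebra. -/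
/-!
The pre-Lie product of the ladders is `y_p ▷ y_q = y_{p+q}` when the word of `q` followed by
the word of `p` is again a ladder word `1^a 2^b`, and `0` otherwise. It is in fact associative:
both bracketings of `y_p ▷ y_q ▷ y_r` are nonzero exactly when the words of `r`, `q`, `p`
concatenate to a ladder word. The given bracket is the commutator of `▷`, and the commutator of
an associative product satisfies the Jacobi identity.
-/

open Finsupp

theorem Finsupp.assoc_of_forall_single {R α : Type*} [CommSemiring R]
    (μ : (α →₀ R) →ₗ[R] (α →₀ R) →ₗ[R] α →₀ R)
    (h : ∀ a b c, μ (μ (single a 1) (single b 1)) (single c 1) =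
      μ (single a 1) (μ (single b 1) (single c 1)))
    (x y z : α →₀ R) : μ (μ x y) z = μ x (μ y z) := by
  have key : LinearMap.llcomp R _ _ _ μ ∘ₗ μ =
      LinearMap.lcomp R _ μ ∘ₗ LinearMap.llcomp R _ _ _ ∘ₗ μ := by
    ext a b c : 6
    simp [h]
  simpa using congr($key x y z)

theorem LinearMap.leibniz_sub_flip_of_assoc {R M : Type*} [CommSemiring R] [AddCommGroup M]
    [Module R M] (μ : M →ₗ[R] M →ₗ[R] M) (h : ∀ x y z, μ (μ x y) z = μ x (μ y z)) (x y z : M) :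
    (μ - μ.flip) x ((μ - μ.flip) y z) =
      (μ - μ.flip) ((μ - μ.flip) x y) z + (μ - μ.flip) y ((μ - μ.flip) x z) := by
  simp only [LinearMap.sub_apply, LinearMap.flip_apply, map_sub, h]
  abel

/-- `p : Ladder` stands for the ladder `L(p.1.1, p.1.2)`, i.e. the word `1^p.1.1 2^p.1.2`. -/
abbrev Ladder := {p : ℕ × ℕ // p ≠ (0, 0)}

namespace Ladder

def append (p q : Ladder) : Ladder := ⟨p.1 + q.1, fun h => p.2 (add_eq_zero.1 h).1⟩

/-- The word of `q` followed by the word of `p` is again a ladder word. -/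
def Composable (p q : Ladder) : Prop := p.1.1 = 0 ∨ q.1.2 = 0

instance : DecidableRel Composable := fun _ _ => inferInstanceAs (Decidable (_ ∨ _))

theorem append_assoc (p q r : Ladder) : (p.append q).append r = p.append (q.append r) :=
  Subtype.ext (add_assoc _ _ _)

theorem composable_assoc (p q r : Ladder) :
    Composable p q ∧ Composable (p.append q) r ↔ Composable q r ∧ Composable p (q.append r) := by
  simp only [Composable, append, Prod.fst_add, Prod.snd_add]
  omega

variable (R : Type*) [CommSemiring R]

noncomputable def mul : (Ladder →₀ R) →ₗ[R] (Ladder →₀ R) →ₗ[R] Ladder →₀ R :=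
  linearCombination R fun p => linearCombination R fun q =>
    if Composable p q then single (p.append q) 1 else 0

theorem mul_single_single (p q : Ladder) :
    mul R (single p 1) (single q 1) = if Composable p q then single (p.append q) 1 else 0 := by
  simp [mul]

theorem mul_assoc (x y z : Ladder →₀ R) : mul R (mul R x y) z = mul R x (mul R y z) := by
  refine Finsupp.assoc_of_forall_single _ (fun p q r => ?_) x y z
  simp only [mul_single_single, apply_ite (mul R · (single r 1)), apply_ite (mul R (single p 1)),
    map_zero, LinearMap.zero_apply, ← ite_and, composable_assoc, append_assoc]

end Ladder

/-- The Lie algebra of primitives of the Ringel-Hall algebra of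
two-colored ladders (a block of color 1 above a block of color 2).  Let `V` be the
free vector space on basis `{y_{i,j} : (i,j) ∈ ℕ² \ {(0,0)}}` and `br` the bilinear
bracket determined by the nonzero relations `[y_{i,0}, y_{0,n}] = -y_{i,n}` (`i,n>0`),
`[y_{i,0}, y_{m,n}] = -y_{m+i,n}` (`i,m,n>0`), `[y_{0,j}, y_{m,n}] = y_{m,n+j}`
(`j,m,n>0`), all other brackets of basis elements zero, extended antisymmetrically.
Then `br` is antisymmetric and satisfies the Jacobi identity, so `V` is a Lie
algebra. -/
theorem stmt19
    (br : ({p : ℕ × ℕ // p ≠ (0,0)} →₀ ℚ) →ₗ[ℚ]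
          ({p : ℕ × ℕ // p ≠ (0,0)} →₀ ℚ) →ₗ[ℚ]
          ({p : ℕ × ℕ // p ≠ (0,0)} →₀ ℚ))
    (hanti : ∀ x y : {p : ℕ × ℕ // p ≠ (0,0)},
      br (Finsupp.single x 1) (Finsupp.single y 1) =
        -(br (Finsupp.single y 1) (Finsupp.single x 1)))
    (h1 : ∀ i n : ℕ, ∀ (hi : 0 < i) (hn : 0 < n),
      br (Finsupp.single ⟨(i,0), by simp [Prod.ext_iff]; omega⟩ 1)
         (Finsupp.single ⟨(0,n), by simp [Prod.ext_iff]; omega⟩ 1) =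
        -(Finsupp.single ⟨(i,n), by simp [Prod.ext_iff]; omega⟩ 1))
    (h2 : ∀ i m n : ℕ, ∀ (hi : 0 < i) (hm : 0 < m) (hn : 0 < n),
      br (Finsupp.single ⟨(i,0), by simp [Prod.ext_iff]; omega⟩ 1)
         (Finsupp.single ⟨(m,n), by simp [Prod.ext_iff]; omega⟩ 1) =
        -(Finsupp.single ⟨(m+i,n), by simp [Prod.ext_iff]; omega⟩ 1))
    (h3 : ∀ j m n : ℕ, ∀ (hj : 0 < j) (hm : 0 < m) (hn : 0 < n),
      br (Finsupp.single ⟨(0,j), by simp [Prod.ext_iff]; omega⟩ 1)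
         (Finsupp.single ⟨(m,n), by simp [Prod.ext_iff]; omega⟩ 1) =
        Finsupp.single ⟨(m,n+j), by simp [Prod.ext_iff]; omega⟩ 1)
    (h4 : ∀ i m : ℕ, ∀ (hi : 0 < i) (hm : 0 < m),
      br (Finsupp.single ⟨(i,0), by simp [Prod.ext_iff]; omega⟩ 1)
         (Finsupp.single ⟨(m,0), by simp [Prod.ext_iff]; omega⟩ 1) = 0)
    (h5 : ∀ j n : ℕ, ∀ (hj : 0 < j) (hn : 0 < n),
      br (Finsupp.single ⟨(0,j), by simp [Prod.ext_iff]; omega⟩ 1)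
         (Finsupp.single ⟨(0,n), by simp [Prod.ext_iff]; omega⟩ 1) = 0)
    (h6 : ∀ i j m n : ℕ, ∀ (hi : 0 < i) (hj : 0 < j) (hm : 0 < m) (hn : 0 < n),
      br (Finsupp.single ⟨(i,j), by simp [Prod.ext_iff]; omega⟩ 1)
         (Finsupp.single ⟨(m,n), by simp [Prod.ext_iff]; omega⟩ 1) = 0) :
    -- antisymmetry on all of V and the Jacobi identity (in Leibniz form):
    (∀ x y, br x y = -(br y x)) ∧
    (∀ x y z, br x (br y z) = br (br x y) z + br y (br x z)) := by
  have hbr : br = Ladder.mul ℚ - (Ladder.mul ℚ).flip := by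
    ext ⟨⟨_ | i, _ | j⟩, hp⟩ ⟨⟨_ | m, _ | n⟩, hq⟩ : 4
    all_goals simp only [LinearMap.comp_apply, lsingle_apply, LinearMap.sub_apply,
      LinearMap.flip_apply, Ladder.mul_single_single]
    all_goals first
      | exact absurd rfl hp
      | exact absurd rfl hq
      | simp only [Ladder.Composable, Ladder.append, Prod.mk_add_mk]
    case zero.succ.zero.succ => rw [h5 _ _ j.succ_pos n.succ_pos]; simp [add_comm]
    case zero.succ.succ.zero => rw [hanti, h1 _ _ m.succ_pos j.succ_pos]; simp
    case zero.succ.succ.succ => rw [h3 _ _ _ j.succ_pos m.succ_pos n.succ_pos]; simp [add_comm]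
    case succ.zero.zero.succ => rw [h1 _ _ i.succ_pos n.succ_pos]; simp
    case succ.zero.succ.zero => rw [h4 _ _ i.succ_pos m.succ_pos]; simp [add_comm]
    case succ.zero.succ.succ => rw [h2 _ _ _ i.succ_pos m.succ_pos n.succ_pos]; simp [add_comm]
    case succ.succ.zero.succ =>
      rw [hanti, h3 _ _ _ n.succ_pos i.succ_pos j.succ_pos]; simp [add_comm]
    case succ.succ.succ.zero => rw [hanti, h2 _ _ _ m.succ_pos i.succ_pos j.succ_pos]; simp
    case succ.succ.succ.succ => rw [h6 _ _ _ _ i.succ_pos j.succ_pos m.succ_pos n.succ_pos]; simp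
  refine ⟨fun x y => by simp [hbr], fun x y z => ?_⟩
  rw [hbr]
  exact LinearMap.leibniz_sub_flip_of_assoc _ (Ladder.mul_assoc ℚ) x y z
end
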